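/- For any Kurepa tree T, there exists a Kurepa tree U which is a binary downward-closed subtree of 2^{<ω₁} such that the branch spaces [T] and [U] (with the cone topologies) are homeomorphic. -/

import Mathlib

noncomputable section

/-- The ordinal ω₁. -/
def w1 : Ordinal.{0} := (Cardinal.aleph 1).ord

/-- A binary sequence with ordinal domain: an element of `2^{≤Ord}`.
Values beyond the domain are normalized to `false`. -/
structure BSeq where
  dom : Ordinal.{0}
  val : Ordinal.{0} → Bool
  norm : ∀ i, dom ≤ i → val i = false

namespace BSeq

/-- `s.Ext t` means `s` is an initial segment of `t` (i.e. `s ⊆ t` as functions). -/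
def Ext (s t : BSeq) : Prop := s.dom ≤ t.dom ∧ ∀ i < s.dom, s.val i = t.val i

/-- The empty sequence. -/
def nil : BSeq := ⟨0, fun _ => false, fun _ _ => rfl⟩

/-- Restriction of a sequence to (its intersection with) an ordinal `α`. -/
def restrict (s : BSeq) (α : Ordinal) : BSeq where
  dom := min α s.dom
  val := fun i => if i < α ∧ i < s.dom then s.val i else false
  norm := by
    intro i hi
    have hc : ¬(i < α ∧ i < s.dom) := by
      rintro ⟨h1, h2⟩
      rcases min_le_iff.mp hi with h | h
      · exact absurd h1 (not_lt.mpr h)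
      · exact absurd h2 (not_lt.mpr h)
    simp [hc]

end BSeq

/-- `b` is a cofinal branch of the tree `(T, <)` with height function `ht`:
a downward-closed chain meeting every level below ω₁. -/
def IsBranch {T : Type} [PartialOrder T] (ht : T → Ordinal) (b : Set T) : Prop :=
  IsChain (· ≤ ·) b ∧ (∀ x ∈ b, ∀ y, y < x → y ∈ b) ∧ ∀ α < w1, ∃ x ∈ b, ht x = α

/-- `(T, <)` together with the height function `ht` is a set-theoretic tree of
height ω₁: heights are countable ordinals, the strict order raises height, the
predecessors of any node are linearly ordered with exactly one on each lower
level, and every level below ω₁ is nonempty. -/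
structure IsTreeW1 {T : Type} [PartialOrder T] (ht : T → Ordinal) : Prop where
  ht_lt : ∀ x : T, ht x < w1
  lt_ht : ∀ {x y : T}, x < y → ht x < ht y
  pred_linear : ∀ {x y z : T}, x < z → y < z → x ≤ y ∨ y ≤ x
  pred_exists : ∀ z : T, ∀ α < ht z, ∃ x : T, x < z ∧ ht x = α
  height_w1 : ∀ α < w1, ∃ x : T, ht x = α

/-- The space of cofinal branches of the tree. -/
abbrev Branches {T : Type} [PartialOrder T] (ht : T → Ordinal) : Type :=
  {b : Set T // IsBranch ht b}

/-- The cone topology on the space of cofinal branches. -/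
def coneTop {T : Type} [PartialOrder T] (ht : T → Ordinal) :
    TopologicalSpace (Branches ht) :=
  TopologicalSpace.generateFrom
    {S : Set (Branches ht) | ∃ x : T, S = {b : Branches ht | x ∈ b.1}}

/-- The space `2^{ω₁}`. -/
abbrev FullSeq : Type 1 := {g : BSeq // g.dom = w1}

/-- The cone topology on `2^{ω₁}`: basic open sets are determined by elements of `2^{<ω₁}`. -/
def seqTop : TopologicalSpace FullSeq :=
  TopologicalSpace.generateFrom
    {S : Set FullSeq | ∃ s : BSeq, s.dom < w1 ∧ S = {g : FullSeq | s.Ext g.1}}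

/-- `b` is a cofinal branch of the downward-closed subtree `U` of `2^{<ω₁}`,
identified with a function `ω₁ → 2` all of whose proper restrictions lie in `U`. -/
def TBranch (U : Set BSeq) (b : BSeq) : Prop := b.dom = w1 ∧ ∀ α < w1, b.restrict α ∈ U

/-- The space of cofinal branches of `U`. -/
abbrev TBranches (U : Set BSeq) : Type 1 := {b : BSeq // TBranch U b}

/-- The cone topology on the branches of `U`. -/
def tconeTop (U : Set BSeq) : TopologicalSpace (TBranches U) :=
  TopologicalSpace.generateFrom
    {S : Set (TBranches U) | ∃ x ∈ U, S = {c : TBranches U | x.Ext c.1}}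

section Stmt14Aux

lemma w1_isLimit : Order.IsSuccLimit w1 := Cardinal.isSuccLimit_ord (Cardinal.aleph0_le_aleph 1)

lemma w1_pos : 0 < w1 := w1_isLimit.pos

lemma lt_add_one_ord (o : Ordinal) : o < o + 1 := by
  rw [Ordinal.add_one_eq_succ]; exact Order.lt_succ o

lemma ord_le_of_lt_add_one {a b : Ordinal} (h : a < b + 1) : a ≤ b := by
  rw [Ordinal.add_one_eq_succ] at h; exact Order.lt_succ_iff.mp h

lemma succ_lt_w1 {α : Ordinal} (h : α < w1) : α + 1 < w1 := by
  have h2 := w1_isLimit.succ_lt h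
  rwa [Ordinal.add_one_eq_succ]

lemma card_lt_of_lt_w1 {α : Ordinal} (h : α < w1) : α.card < Cardinal.aleph 1 :=
  Cardinal.lt_ord.mp h

lemma card_le_aleph0_of_lt_w1 {α : Ordinal} (h : α < w1) : α.card ≤ Cardinal.aleph0 := by
  have h2 := card_lt_of_lt_w1 h
  rwa [← Cardinal.succ_aleph0, Order.lt_succ_iff] at h2

lemma countable_toType {α : Ordinal} (h : α < w1) : Countable α.ToType := by
  rw [← Cardinal.mk_le_aleph0_iff, Cardinal.mk_toType]
  exact card_le_aleph0_of_lt_w1 h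

lemma bdd_of_countable {ι : Type} [Countable ι] (f : ι → Ordinal.{0}) (hf : ∀ i, f i < w1) :
    ∃ δ, δ < w1 ∧ ∀ i, f i ≤ δ := by
  refine ⟨iSup f, ?_, fun i => Ordinal.le_iSup f i⟩
  refine Ordinal.iSup_lt_ord ?_ hf
  show Cardinal.mk ι < (Cardinal.aleph 1).ord.cof
  rw [Cardinal.isRegular_aleph_one.cof_eq]
  exact lt_of_le_of_lt (Cardinal.mk_le_aleph0_iff.mpr ‹_›) Cardinal.aleph0_lt_aleph_one

namespace BSeq

theorem ext' {s t : BSeq} (h1 : s.dom = t.dom) (h2 : s.val = t.val) : s = t := by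
  cases s; cases t; simp_all

theorem restrict_dom' (s : BSeq) (α : Ordinal) : (s.restrict α).dom = min α s.dom := rfl

theorem restrict_val_of_lt {s : BSeq} {α i : Ordinal} (h1 : i < α) (h2 : i < s.dom) :
    (s.restrict α).val i = s.val i := by simp [restrict, h1, h2]

theorem restrict_val_of_not_lt {s : BSeq} {α i : Ordinal} (h1 : ¬(i < α ∧ i < s.dom)) :
    (s.restrict α).val i = false := by simp only [restrict, if_neg h1]

theorem restrict_restrict (s : BSeq) (α β : Ordinal) :
    (s.restrict α).restrict β = s.restrict (min β α) := by
  refine ext' ?_ ?_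
  · show min β (min α s.dom) = min (min β α) s.dom
    rw [min_assoc]
  · funext i
    by_cases h1 : i < α <;> by_cases h2 : i < β <;> by_cases h3 : i < s.dom <;>
      simp [restrict, h1, h2, h3, lt_min_iff]

theorem restrict_of_dom_le {s : BSeq} {α : Ordinal} (h : s.dom ≤ α) : s.restrict α = s := by
  refine ext' ?_ ?_
  · show min α s.dom = s.dom
    exact min_eq_right h
  · funext i
    by_cases h3 : i < s.dom
    · exact restrict_val_of_lt (lt_of_lt_of_le h3 h) h3
    · rw [restrict_val_of_not_lt (fun hc => h3 hc.2), s.norm i (le_of_not_gt h3)]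

theorem ext_of_restrict_eq {s t : BSeq} {α : Ordinal} (h : t.restrict α = s) : s.Ext t := by
  subst h
  refine ⟨min_le_right _ _, fun i hi => ?_⟩
  exact restrict_val_of_lt (lt_of_lt_of_le hi (min_le_left _ _))
    (lt_of_lt_of_le hi (min_le_right _ _))

theorem restrict_eq_of_ext {s t : BSeq} (h : s.Ext t) : t.restrict s.dom = s := by
  refine ext' ?_ ?_
  · show min s.dom t.dom = s.dom
    exact min_eq_left h.1
  · funext i
    by_cases h3 : i < s.dom
    · rw [restrict_val_of_lt h3 (lt_of_lt_of_le h3 h.1)]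
      exact (h.2 i h3).symm
    · rw [restrict_val_of_not_lt (fun hc => h3 hc.1), s.norm i (le_of_not_gt h3)]

end BSeq

end Stmt14Aux

/-- for any Kurepa tree `T` there is a Kurepa tree `U` which is
a binary downward-closed subtree of `2^{<ω₁}` such that the branch spaces
`[T]` and `[U]` with their cone topologies are homeomorphic. -/
theorem stmt14 {T : Type} [PartialOrder T] (ht : T → Ordinal) (htree : IsTreeW1 ht)
    (hcount : ∀ α : Ordinal, {x : T | ht x = α}.Countable)
    (hkurepa : Cardinal.aleph 2 ≤ Cardinal.mk (Branches ht)) :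
    ∃ U : Set BSeq,
      (∀ x ∈ U, x.dom < w1) ∧
      (∀ x ∈ U, ∀ α : Ordinal, x.restrict α ∈ U) ∧
      (∀ α < w1, {x ∈ U | x.dom = α}.Countable) ∧
      (∀ α < w1, ∃ x ∈ U, x.dom = α) ∧
      Cardinal.aleph 2 ≤ Cardinal.mk (TBranches U) ∧
      ∃ e : Branches ht ≃ TBranches U,
        @Continuous _ _ (coneTop ht) (tconeTop U) e ∧
        @Continuous _ _ (tconeTop U) (coneTop ht) e.symm := by
  classical
  -- nonemptiness
  have hTne : Nonempty T := by
    obtain ⟨x, -⟩ := htree.height_w1 0 w1_pos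
    exact ⟨x⟩
  have hBne : Nonempty (Branches ht) := by
    rw [← Cardinal.mk_ne_zero_iff]
    intro h0
    rw [h0] at hkurepa
    exact absurd hkurepa (Cardinal.aleph_pos 2).not_ge
  -- cardinality of T is at most aleph 1
  have hToType : Cardinal.mk w1.ToType = Cardinal.aleph 1 := by
    rw [Cardinal.mk_toType]
    exact Cardinal.card_ord _
  have hTle : Cardinal.mk T ≤ Cardinal.aleph 1 := by
    have hunion : (Set.univ : Set T) =
        ⋃ i : w1.ToType, {x : T | ht x = ((Ordinal.ToType.mk (o := w1)).symm i).1} := by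
      ext x
      simp only [Set.mem_univ, Set.mem_iUnion, Set.mem_setOf_eq, true_iff]
      exact ⟨(Ordinal.ToType.mk (o := w1)) ⟨ht x, htree.ht_lt x⟩, by rw [OrderIso.symm_apply_apply]⟩
    have h1 : Cardinal.mk T = Cardinal.mk (Set.univ : Set T) := Cardinal.mk_univ.symm
    rw [h1, hunion]
    refine le_trans (Cardinal.mk_iUnion_le _) ?_
    have h2 : (⨆ i : w1.ToType,
        Cardinal.mk {x : T | ht x = ((Ordinal.ToType.mk (o := w1)).symm i).1}) ≤ Cardinal.aleph0 := by
      haveI : Nonempty w1.ToType := Ordinal.nonempty_toType_iff.mpr w1_pos.ne'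
      exact ciSup_le' fun i => Cardinal.mk_le_aleph0_iff.mpr (Set.countable_coe_iff.mpr (hcount _))
    calc Cardinal.mk w1.ToType * (⨆ i : w1.ToType,
          Cardinal.mk {x : T | ht x = ((Ordinal.ToType.mk (o := w1)).symm i).1})
        ≤ Cardinal.mk w1.ToType * Cardinal.aleph0 := mul_le_mul' le_rfl h2
      _ = Cardinal.aleph 1 * Cardinal.aleph0 := by rw [hToType]
      _ = Cardinal.aleph 1 := by
          rw [Cardinal.mul_eq_max (Cardinal.aleph0_le_aleph 1) le_rfl]
          exact max_eq_left (Cardinal.aleph0_le_aleph 1)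
  obtain ⟨k⟩ : Nonempty (T ↪ w1.ToType) := by
    rw [← Cardinal.le_def, hToType]
    exact hTle
  -- the enumeration of T by countable ordinals
  set e : Ordinal → T := fun β =>
    if h : β < w1 then Function.invFun k ((Ordinal.ToType.mk (o := w1)) ⟨β, h⟩)
    else Classical.arbitrary T with he_def
  have he : ∀ x : T, ∃ β, β < w1 ∧ e β = x := by
    intro x
    have hlt : (((Ordinal.ToType.mk (o := w1)).symm (k x)).1 : Ordinal) < w1 :=
      ((Ordinal.ToType.mk (o := w1)).symm (k x)).2
    refine ⟨((Ordinal.ToType.mk (o := w1)).symm (k x)).1, hlt, ?_⟩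
    simp only [he_def]
    rw [dif_pos hlt]
    rw [show (⟨_, hlt⟩ : Set.Iio w1) = (Ordinal.ToType.mk (o := w1)).symm (k x) from
      Subtype.coe_eta _ _, OrderIso.apply_symm_apply]
    exact Function.leftInverse_invFun k.injective x
  -- the coding function
  set chi : Branches ht → BSeq := fun b =>
    ⟨w1, fun β => decide (β < w1 ∧ e β ∈ b.1),
      fun i hi => decide_eq_false (fun hc => absurd hc.1 (not_lt.mpr hi))⟩ with hchi
  have chi_dom : ∀ b, (chi b).dom = w1 := fun _ => rfl
  have chi_val : ∀ b (β : Ordinal), β < w1 → ((chi b).val β = true ↔ e β ∈ b.1) := by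
    intro b β hβ
    simp [hchi, hβ]
  -- membership in a branch from a node above
  have memL : ∀ (b : Branches ht) (x y : T), x ∈ b.1 → ht y ≤ ht x → (y ∈ b.1 ↔ y ≤ x) := by
    intro b x y hx hyx
    constructor
    · intro hy
      by_cases hxy : y = x
      · exact le_of_eq hxy
      · rcases b.2.1 hy hx hxy with h | h
        · exact h
        · rcases lt_or_eq_of_le h with h' | h'
          · exact absurd (htree.lt_ht h') (not_lt.mpr hyx)
          · exact le_of_eq h'.symm
    · intro hle
      rcases lt_or_eq_of_le hle with h' | h'
      · exact b.2.2.1 x hx y h'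
      · rwa [h']
  -- the trace lemma
  have traceEq : ∀ (b b' : Branches ht) (α δ : Ordinal) (x : T),
      (∀ β, β < α → β < w1 → ht (e β) ≤ δ) → x ∈ b.1 → x ∈ b'.1 → ht x = δ →
      (chi b).restrict α = (chi b').restrict α := by
    intro b b' α δ x hδ hx hx' hhtx
    refine BSeq.ext' rfl ?_
    funext i
    by_cases h1 : i < α
    · by_cases h2 : i < w1
      · rw [BSeq.restrict_val_of_lt (s := chi b) h1 (by rw [chi_dom]; exact h2),
          BSeq.restrict_val_of_lt (s := chi b') h1 (by rw [chi_dom]; exact h2)]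
        rw [Bool.eq_iff_iff, chi_val b i h2, chi_val b' i h2,
          memL b x (e i) hx (hhtx ▸ hδ i h1 h2), memL b' x (e i) hx' (hhtx ▸ hδ i h1 h2)]
      · rw [BSeq.restrict_val_of_not_lt (s := chi b) (α := α) (i := i)
            (by rw [chi_dom]; tauto),
          BSeq.restrict_val_of_not_lt (s := chi b') (α := α) (i := i)
            (by rw [chi_dom]; tauto)]
    · rw [BSeq.restrict_val_of_not_lt (s := chi b) (α := α) (i := i) (by tauto),
        BSeq.restrict_val_of_not_lt (s := chi b') (α := α) (i := i) (by tauto)]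
  -- bounded covers of initial segments of the enumeration
  have cov : ∀ α : Ordinal, α < w1 → ∃ δ, δ < w1 ∧ ∀ β, β < α → ht (e β) ≤ δ := by
    intro α hα
    haveI := countable_toType hα
    obtain ⟨δ, hδ1, hδ2⟩ := bdd_of_countable
      (fun i : α.ToType => ht (e ((Ordinal.ToType.mk (o := α)).symm i).1))
      (fun i => htree.ht_lt _)
    refine ⟨δ, hδ1, fun β hβ => ?_⟩
    have h3 := hδ2 ((Ordinal.ToType.mk (o := α)) ⟨β, hβ⟩)
    rwa [OrderIso.symm_apply_apply] at h3
  -- every node of small height is enumerated at a small index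
  have covht : ∀ γ : Ordinal, γ < w1 →
      ∃ lam, lam < w1 ∧ ∀ x : T, ht x ≤ γ → ∃ β, β < lam ∧ e β = x := by
    intro γ hγ
    have hS : {x : T | ht x ≤ γ}.Countable := by
      have hrw : {x : T | ht x ≤ γ} =
          ⋃ i : (γ + 1).ToType,
            {x : T | ht x = ((Ordinal.ToType.mk (o := γ + 1)).symm i).1} := by
        ext x
        simp only [Set.mem_setOf_eq, Set.mem_iUnion]
        constructor
        · intro h
          refine ⟨(Ordinal.ToType.mk (o := γ + 1)) ⟨ht x, ?_⟩, by rw [OrderIso.symm_apply_apply]⟩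
          exact lt_of_le_of_lt h (lt_add_one_ord γ)
        · rintro ⟨i, h⟩
          rw [h]
          exact ord_le_of_lt_add_one ((Ordinal.ToType.mk (o := γ + 1)).symm i).2
      rw [hrw]
      haveI := countable_toType (succ_lt_w1 hγ)
      exact Set.countable_iUnion fun i => hcount _
    haveI := hS.to_subtype
    obtain ⟨δ, hδ1, hδ2⟩ := bdd_of_countable
      (fun x : {x : T | ht x ≤ γ} => Classical.choose (he x.1))
      (fun x => (Classical.choose_spec (he x.1)).1)
    refine ⟨δ + 1, succ_lt_w1 hδ1, fun x hx => ?_⟩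
    refine ⟨Classical.choose (he x), ?_, (Classical.choose_spec (he x)).2⟩
    exact lt_of_le_of_lt (hδ2 ⟨x, hx⟩) (lt_add_one_ord δ)
  -- the subtree U
  set U : Set BSeq := {s : BSeq | ∃ b : Branches ht, ∃ α, α < w1 ∧ s = (chi b).restrict α}
    with hU
  have hUdom : ∀ s ∈ U, s.dom < w1 := by
    rintro s ⟨b, α, hα, rfl⟩
    calc ((chi b).restrict α).dom = min α (chi b).dom := rfl
      _ ≤ α := min_le_left _ _
      _ < w1 := hα
  have hlevel : ∀ s ∈ U, ∀ α, α < w1 → s.dom = α →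
      ∃ b : Branches ht, s = (chi b).restrict α := by
    rintro s ⟨b, α', hα', rfl⟩ α hα hdom
    refine ⟨b, ?_⟩
    have hmin : min α' w1 = α' := min_eq_left hα'.le
    have hd : ((chi b).restrict α').dom = α' := by
      rw [BSeq.restrict_dom', chi_dom]; exact hmin
    rw [hd] at hdom
    rw [hdom]
  -- node picking
  have hnode : ∀ (b : Branches ht) (δ : Ordinal), δ < w1 → ∃ x, x ∈ b.1 ∧ ht x = δ := by
    intro b δ hδ
    obtain ⟨x, hx1, hx2⟩ := b.2.2.2 δ hδ
    exact ⟨x, hx1, hx2⟩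
  -- levels of U are countable
  have hcountlevel : ∀ α < w1, {x ∈ U | x.dom = α}.Countable := by
    intro α hα
    obtain ⟨δ, hδ1, hδ2⟩ := cov α hα
    set F : BSeq → T := fun s =>
      if h : ∃ b : Branches ht, s = (chi b).restrict α then
        Classical.choose (hnode (Classical.choose h) δ hδ1)
      else Classical.arbitrary T with hF
    refine Set.countable_of_injective_of_countable_image (f := F) ?_ ?_
    · rintro s ⟨hsU, hsdom⟩ s' ⟨hs'U, hs'dom⟩ hFs
      obtain hs := hlevel s hsU α hα hsdom
      obtain hs' := hlevel s' hs'U α hα hs'dom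
      rw [hF] at hFs
      simp only [dif_pos hs, dif_pos hs'] at hFs
      obtain ⟨hmem, hht⟩ := Classical.choose_spec (hnode (Classical.choose hs) δ hδ1)
      obtain ⟨hmem', hht'⟩ := Classical.choose_spec (hnode (Classical.choose hs') δ hδ1)
      have hx' : Classical.choose (hnode (Classical.choose hs) δ hδ1) ∈
          (Classical.choose hs').1 := by
        rw [hFs]; exact hmem'
      have htr := traceEq (Classical.choose hs) (Classical.choose hs') α δ _
        (fun β hβ _ => hδ2 β hβ) hmem hx' hht
      rw [Classical.choose_spec hs, Classical.choose_spec hs', htr]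
    · refine Set.Countable.mono ?_ (hcount δ)
      rintro y ⟨s, ⟨hsU, hsdom⟩, rfl⟩
      obtain hs := hlevel s hsU α hα hsdom
      show ht (F s) = δ
      rw [hF]
      simp only [dif_pos hs]
      exact (Classical.choose_spec (hnode (Classical.choose hs) δ hδ1)).2
  -- the coding map into branches of U
  have hEchiT : ∀ b : Branches ht, TBranch U (chi b) := by
    intro b
    exact ⟨rfl, fun α hα => ⟨b, α, hα, rfl⟩⟩
  set Echi : Branches ht → TBranches U := fun b => ⟨chi b, hEchiT b⟩ with hEchi
  have hinj : Function.Injective Echi := by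
    intro b b' h
    have hch : chi b = chi b' := congrArg Subtype.val h
    apply Subtype.ext
    ext x
    obtain ⟨β, hβ, rfl⟩ := he x
    rw [← chi_val b β hβ, ← chi_val b' β hβ, hch]
  have hsurj : Function.Surjective Echi := by
    intro c
    have hcdom : c.1.dom = w1 := c.2.1
    have hba : ∀ α, α < w1 → ∃ b : Branches ht, c.1.restrict α = (chi b).restrict α := by
      intro α hα
      obtain ⟨b, α', hα', hs⟩ := c.2.2 α hα
      have hdd : (c.1.restrict α).dom = ((chi b).restrict α').dom := by rw [hs]
      rw [BSeq.restrict_dom', BSeq.restrict_dom', hcdom, chi_dom,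
        min_eq_left hα.le, min_eq_left hα'.le] at hdd
      subst hdd
      exact ⟨b, hs⟩
    choose bfam hbfam using hba
    have hval : ∀ β α (hβα : β < α) (hα : α < w1),
        (c.1.val β = true ↔ e β ∈ (bfam α hα).1) := by
      intro β α hβα hα
      have hβ : β < w1 := hβα.trans hα
      have h := congrArg (fun s : BSeq => s.val β) (hbfam α hα)
      beta_reduce at h
      rw [BSeq.restrict_val_of_lt (s := c.1) hβα (by rw [hcdom]; exact hβ),
        BSeq.restrict_val_of_lt (s := chi (bfam α hα)) hβα (by rw [chi_dom]; exact hβ)] at h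
      rw [h, chi_val _ _ hβ]
    set B : Set T := {x : T | ∃ β, β < w1 ∧ e β = x ∧ c.1.val β = true} with hB
    have hmemB : ∀ (x : T) (β : Ordinal), β < w1 → e β = x → (x ∈ B ↔ c.1.val β = true) := by
      intro x β hβ hex
      constructor
      · rintro ⟨β', hβ', hex', hv'⟩
        have hm : max β β' + 1 < w1 := succ_lt_w1 (max_lt hβ hβ')
        have h2 : β < max β β' + 1 := lt_of_le_of_lt (le_max_left β β') (lt_add_one_ord _)
        have h1 : β' < max β β' + 1 := lt_of_le_of_lt (le_max_right β β') (lt_add_one_ord _)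
        rw [hval β _ h2 hm]
        rw [hval β' _ h1 hm] at hv'
        rw [hex, ← hex']
        exact hv'
      · intro hv
        exact ⟨β, hβ, hex, hv⟩
    have hBbranch : IsBranch ht B := by
      refine ⟨?_, ?_, ?_⟩
      · rintro x ⟨β, hβ, hex, hv⟩ y ⟨β', hβ', hex', hv'⟩ hxy
        have hm : max β β' + 1 < w1 := succ_lt_w1 (max_lt hβ hβ')
        have h2 : β < max β β' + 1 := lt_of_le_of_lt (le_max_left β β') (lt_add_one_ord _)
        have h1 : β' < max β β' + 1 := lt_of_le_of_lt (le_max_right β β') (lt_add_one_ord _)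
        rw [hval β _ h2 hm] at hv
        rw [hval β' _ h1 hm] at hv'
        exact (bfam _ hm).2.1 (hex ▸ hv) (hex' ▸ hv') hxy
      · rintro x ⟨β, hβ, hex, hv⟩ y hyx
        obtain ⟨β', hβ', hex'⟩ := he y
        have hm : max β β' + 1 < w1 := succ_lt_w1 (max_lt hβ hβ')
        have h2 : β < max β β' + 1 := lt_of_le_of_lt (le_max_left β β') (lt_add_one_ord _)
        have h1 : β' < max β β' + 1 := lt_of_le_of_lt (le_max_right β β') (lt_add_one_ord _)
        rw [hval β _ h2 hm] at hv
        have hyb : y ∈ (bfam _ hm).1 := (bfam _ hm).2.2.1 x (hex ▸ hv) y hyx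
        refine ⟨β', hβ', hex', ?_⟩
        rw [hval β' _ h1 hm]
        rwa [hex']
      · intro γ hγ
        obtain ⟨lam, hlam1, hlam2⟩ := covht γ hγ
        have hm : max lam (γ + 1) < w1 := max_lt hlam1 (succ_lt_w1 hγ)
        obtain ⟨x, hxb, hxht⟩ := hnode (bfam _ hm) γ hγ
        obtain ⟨β, hβlam, hex⟩ := hlam2 x (le_of_eq hxht)
        have hβm : β < max lam (γ + 1) := lt_of_lt_of_le hβlam (le_max_left _ _)
        have hβ : β < w1 := lt_trans hβm hm
        refine ⟨x, ?_, hxht⟩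
        rw [hmemB x β hβ hex, hval β _ hβm hm, hex]
        exact hxb
    refine ⟨⟨B, hBbranch⟩, ?_⟩
    apply Subtype.ext
    show chi ⟨B, hBbranch⟩ = c.1
    refine BSeq.ext' (by rw [chi_dom, hcdom]) ?_
    funext β
    by_cases hβ : β < w1
    · rw [Bool.eq_iff_iff, chi_val _ _ hβ]
      exact hmemB (e β) β hβ rfl
    · rw [(chi ⟨B, hBbranch⟩).norm β (not_lt.mp hβ), c.1.norm β (by rw [hcdom]; exact not_lt.mp hβ)]
  set E := Equiv.ofBijective Echi ⟨hinj, hsurj⟩ with hE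
  have hEval : ∀ b, (E b).1 = chi b := fun b => rfl
  refine ⟨U, hUdom, ?_, hcountlevel, ?_, ?_, E, ?_, ?_⟩
  · -- closure under restriction
    rintro s ⟨b, α, hα, rfl⟩ α'
    rw [BSeq.restrict_restrict]
    exact ⟨b, min α' α, lt_of_le_of_lt (min_le_right _ _) hα, rfl⟩
  · -- all levels nonempty
    intro α hα
    obtain ⟨b0⟩ := hBne
    refine ⟨(chi b0).restrict α, ⟨b0, α, hα, rfl⟩, ?_⟩
    rw [BSeq.restrict_dom', chi_dom]
    exact min_eq_left hα.le
  · -- many branches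
    have h1 : Cardinal.lift.{1} (Cardinal.mk (Branches ht)) =
        Cardinal.lift.{0} (Cardinal.mk (TBranches U)) :=
      Cardinal.lift_mk_eq'.mpr ⟨E⟩
    have h2 : Cardinal.lift.{1} (Cardinal.aleph 2) ≤
        Cardinal.lift.{1} (Cardinal.mk (Branches ht)) :=
      Cardinal.lift_le.mpr hkurepa
    rw [h1, Cardinal.lift_id'] at h2
    rwa [Cardinal.lift_aleph, Ordinal.lift_ofNat] at h2
  · -- continuity of E
    have hcont : @Continuous _ _ (coneTop ht) (TopologicalSpace.generateFrom
        {S : Set (TBranches U) | ∃ x ∈ U, S = {c : TBranches U | x.Ext c.1}}) E := by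
      rw [continuous_generateFrom_iff]
      rintro S ⟨s, hsU, rfl⟩
      obtain ⟨b0, α, hα, hseq⟩ := hsU
      have hsdom : s.dom = α := by
        rw [hseq, BSeq.restrict_dom', chi_dom]; exact min_eq_left hα.le
      obtain ⟨δ, hδ1, hδ2⟩ := cov α hα
      have hpre : E ⁻¹' {c : TBranches U | s.Ext c.1} =
          ⋃ (b : Branches ht) (_ : s.Ext (chi b)),
            {b' : Branches ht | Classical.choose (hnode b δ hδ1) ∈ b'.1} := by
        ext b'
        simp only [Set.mem_preimage, Set.mem_setOf_eq, Set.mem_iUnion]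
        rw [show (E b').1 = chi b' from rfl]
        constructor
        · intro h
          exact ⟨b', h, (Classical.choose_spec (hnode b' δ hδ1)).1⟩
        · rintro ⟨b, hb, hmem⟩
          obtain ⟨hbm, hbht⟩ := Classical.choose_spec (hnode b δ hδ1)
          have htr := traceEq b b' α δ _ (fun β hβ _ => hδ2 β hβ) hbm hmem hbht
          have hs1 : (chi b).restrict α = s := by
            have h3 := BSeq.restrict_eq_of_ext hb
            rwa [hsdom] at h3
          exact BSeq.ext_of_restrict_eq (by rw [← htr, hs1])
      rw [hpre]
      letI : TopologicalSpace (Branches ht) := coneTop ht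
      refine isOpen_iUnion fun b => isOpen_iUnion fun hb => ?_
      exact TopologicalSpace.isOpen_generateFrom_of_mem
        ⟨Classical.choose (hnode b δ hδ1), rfl⟩
    exact hcont
  · -- continuity of E.symm
    have hcont : @Continuous _ _ (tconeTop U) (TopologicalSpace.generateFrom
        {S : Set (Branches ht) | ∃ x : T, S = {b : Branches ht | x ∈ b.1}}) E.symm := by
      rw [continuous_generateFrom_iff]
      rintro S ⟨x, rfl⟩
      obtain ⟨β, hβ, hex⟩ := he x
      have hβ1 : β + 1 < w1 := succ_lt_w1 hβ
      have hkey : ∀ c : TBranches U, (x ∈ (E.symm c).1 ↔ c.1.val β = true) := by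
        intro c
        have h1 : chi (E.symm c) = c.1 := by
          rw [← hEval (E.symm c), Equiv.apply_symm_apply]
        rw [← hex, ← chi_val (E.symm c) β hβ, h1]
      have hpre : E.symm ⁻¹' {b : Branches ht | x ∈ b.1} =
          ⋃ (s : BSeq) (_ : s ∈ U ∧ s.dom = β + 1 ∧ s.val β = true),
            {c : TBranches U | s.Ext c.1} := by
        ext c
        simp only [Set.mem_preimage, Set.mem_setOf_eq, Set.mem_iUnion]
        rw [hkey c]
        constructor
        · intro hv
          refine ⟨c.1.restrict (β + 1), ⟨c.2.2 (β + 1) hβ1, ?_, ?_⟩,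
            BSeq.ext_of_restrict_eq rfl⟩
          · rw [BSeq.restrict_dom', c.2.1]; exact min_eq_left hβ1.le
          · rw [BSeq.restrict_val_of_lt (s := c.1) (lt_add_one_ord β)
              (by rw [c.2.1]; exact hβ)]
            exact hv
        · rintro ⟨s, ⟨hsU, hsdom, hsval⟩, hext⟩
          have h4 := hext.2 β (by rw [hsdom]; exact lt_add_one_ord β)
          rw [← h4]
          exact hsval
      rw [hpre]
      letI : TopologicalSpace (TBranches U) := tconeTop U
      refine isOpen_iUnion fun s => isOpen_iUnion fun hs => ?_
      exact TopologicalSpace.isOpen_generateFrom_of_mem ⟨s, hs.1, rfl⟩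
    exact hcont
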